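/- arXiv:1601.07322 — 3 statements merged into one kernel-verified Lean document; each statement's English description precedes it below -/
import Mathlib

section
/- Under the KKT conditions for the convex program minimizing F(b) = ∑_j a_j ∑_n (1-b_j)^n p_n q_{j,n} over {b ∈ [0,1]^J : ∑_j b_j = K}, if the multiplier ν̄ satisfies ν̄ < a_j p_1 q_{j,1}, then the optimal solution has b̄_j = 1. -/
/-! Below capacity (`b̄ⱼ < 1`) the upper multiplier `ωⱼ` vanishes, so stationarity reads
`hⱼ(b̄ⱼ) = ν - λⱼ ≤ ν`. But every term of the derivative series is nonnegative, so
`hⱼ(b̄ⱼ)` is at least its `n = 1` term `aⱼ p₁ qⱼ,₁ > ν`. -/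

lemma first_term_le_tsum_derivSeries {p q : ℕ → ℝ} {x : ℝ} (hp : ∀ n, 0 ≤ p n)
    (hq : ∀ n, 0 ≤ q n) (hx : 0 ≤ x)
    (hsum : Summable (fun n : ℕ => ((n : ℝ) + 1) * x ^ n * p (n + 1) * q (n + 1))) :
    p 1 * q 1 ≤ ∑' n : ℕ, ((n : ℝ) + 1) * x ^ n * p (n + 1) * q (n + 1) := by
  have hnonneg : ∀ n : ℕ, 0 ≤ ((n : ℝ) + 1) * x ^ n * p (n + 1) * q (n + 1) := fun n => by
    have := hp (n + 1); have := hq (n + 1); positivity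
  simpa using hsum.le_tsum 0 fun n _ => hnonneg n

theorem stmt5_general (J : ℕ) (a : Fin J → ℝ) (p : ℕ → ℝ) (q : Fin J → ℕ → ℝ)
    (ha : ∀ j, 0 ≤ a j) (hp : ∀ n, 0 ≤ p n)
    (hq : ∀ j n, q j n ∈ Set.Icc (0:ℝ) 1)
    (b : Fin J → ℝ) (lam om : Fin J → ℝ) (ν : ℝ)
    (hb : ∀ j, b j ∈ Set.Icc (0:ℝ) 1)
    (hlam : ∀ j, 0 ≤ lam j)
    (hcs2 : ∀ j, om j * (b j - 1) = 0)
    (hder : ∀ j, Summable (fun n : ℕ => ((n:ℝ) + 1) * (1 - b j) ^ n * p (n + 1) * q j (n + 1)))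
    (hstat : ∀ j, a j * ∑' n : ℕ, ((n:ℝ) + 1) * (1 - b j) ^ n * p (n + 1) * q j (n + 1)
      = ν - lam j + om j)
    (j : Fin J) (hν : ν < a j * (p 1 * q j 1)) :
    b j = 1 := by
  by_contra hne
  have hom : om j = 0 := (mul_eq_zero.mp (hcs2 j)).resolve_right (sub_ne_zero.mpr hne)
  have hfirst := first_term_le_tsum_derivSeries hp (fun n => (hq j n).1)
    (sub_nonneg.mpr (hb j).2) (hder j)
  have := mul_le_mul_of_nonneg_left hfirst (ha j)
  linarith [hstat j, hlam j]

/-- KKT conditions for the caching problem: if the multiplier `ν` satisfies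
`ν < a j * p 1 * q j 1`, then the optimal solution has `b̄ j = 1`. -/
theorem stmt5 (J : ℕ) (a : Fin J → ℝ) (p : ℕ → ℝ) (q : Fin J → ℕ → ℝ) (K : ℝ)
    (ha : ∀ j, 0 ≤ a j) (hp : ∀ n, 0 ≤ p n) (hppmf : ∑' n, p n = 1)
    (hq : ∀ j n, q j n ∈ Set.Icc (0:ℝ) 1)
    (b : Fin J → ℝ) (lam om : Fin J → ℝ) (ν : ℝ)
    (hb : ∀ j, b j ∈ Set.Icc (0:ℝ) 1) (hcap : ∑ j, b j = K)
    (hlam : ∀ j, 0 ≤ lam j) (hom : ∀ j, 0 ≤ om j)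
    (hcs1 : ∀ j, lam j * b j = 0) (hcs2 : ∀ j, om j * (b j - 1) = 0)
    (hder : ∀ j, Summable (fun n : ℕ => ((n:ℝ) + 1) * (1 - b j) ^ n * p (n + 1) * q j (n + 1)))
    (hstat : ∀ j, a j * ∑' n : ℕ, ((n:ℝ) + 1) * (1 - b j) ^ n * p (n + 1) * q j (n + 1)
      = ν - lam j + om j)
    (j : Fin J) (hν : ν < a j * (p 1 * q j 1)) :
    b j = 1 :=
  stmt5_general J a p q ha hp hq b lam om ν hb hlam hcs2 hder hstat j hν
end

section
/- Under the same KKT conditions, if ν̄ > a_j ∑_{n=1}^∞ n p_n q_{j,n}, then the optimal solution has b̄_j = 0. -/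
/-!
Since `(1 - b)ⁿ ≤ 1`, the marginal gain `h_j(b_j)` is at most `h_j(0) = a_j ∑ n p_n q_{j,n} < ν`.
Stationarity `h_j(b_j) = ν - λ_j + ω_j` then forces `λ_j > ω_j ≥ 0`, and complementary slackness
`λ_j b_j = 0` gives `b_j = 0`.
-/

theorem tsum_succ_mul_pow_mul_le_tsum_mul {f : ℕ → ℝ} (hf : ∀ n, 0 ≤ f n)
    (hsum : Summable fun n : ℕ => (n : ℝ) * f n) {x : ℝ} (hx0 : 0 ≤ x) (hx1 : x ≤ 1) :
    ∑' n : ℕ, ((n : ℝ) + 1) * x ^ n * f (n + 1) ≤ ∑' n : ℕ, (n : ℝ) * f n := by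
  have hshift : Summable fun n : ℕ => ((n : ℝ) + 1) * f (n + 1) := by
    simpa using (summable_nat_add_iff 1).mpr hsum
  have hle (n : ℕ) : ((n : ℝ) + 1) * x ^ n * f (n + 1) ≤ ((n : ℝ) + 1) * f (n + 1) := by
    rw [mul_right_comm]
    exact mul_le_of_le_one_right (mul_nonneg n.cast_add_one_pos.le (hf _)) (pow_le_one₀ hx0 hx1)
  have hnonneg (n : ℕ) : 0 ≤ ((n : ℝ) + 1) * x ^ n * f (n + 1) :=
    mul_nonneg (mul_nonneg n.cast_add_one_pos.le (pow_nonneg hx0 n)) (hf _)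
  calc ∑' n : ℕ, ((n : ℝ) + 1) * x ^ n * f (n + 1)
      ≤ ∑' n : ℕ, ((n : ℝ) + 1) * f (n + 1) :=
        (hshift.of_nonneg_of_le hnonneg hle).tsum_le_tsum hle hshift
    _ = ∑' n : ℕ, (n : ℝ) * f n := by
        rw [hsum.tsum_eq_zero_add]
        simp

theorem stmt6_general (J : ℕ) (a : Fin J → ℝ) (p : ℕ → ℝ) (q : Fin J → ℕ → ℝ)
    (ha : ∀ j, 0 ≤ a j) (hp : ∀ n, 0 ≤ p n)
    (hq : ∀ j n, q j n ∈ Set.Icc (0:ℝ) 1)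
    (b : Fin J → ℝ) (lam om : Fin J → ℝ) (ν : ℝ)
    (hb : ∀ j, b j ∈ Set.Icc (0:ℝ) 1)
    (hom : ∀ j, 0 ≤ om j)
    (hcs1 : ∀ j, lam j * b j = 0)
    (hsum : ∀ j, Summable (fun n : ℕ => (n:ℝ) * p n * q j n))
    (hstat : ∀ j, a j * ∑' n : ℕ, ((n:ℝ) + 1) * (1 - b j) ^ n * p (n + 1) * q j (n + 1)
      = ν - lam j + om j)
    (j : Fin J) (hν : ν > a j * ∑' n : ℕ, (n:ℝ) * p n * q j n) :
    b j = 0 := by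
  obtain ⟨hb0, hb1⟩ := hb j
  have hgain_le : ∑' n : ℕ, ((n:ℝ) + 1) * (1 - b j) ^ n * p (n + 1) * q j (n + 1)
      ≤ ∑' n : ℕ, (n:ℝ) * p n * q j n := by
    simpa only [mul_assoc] using tsum_succ_mul_pow_mul_le_tsum_mul
      (fun n => mul_nonneg (hp n) (hq j n).1) (by simpa only [mul_assoc] using hsum j)
      (sub_nonneg.mpr hb1) (sub_le_self 1 hb0)
  have hlam_pos : 0 < lam j := by
    linarith [mul_le_mul_of_nonneg_left hgain_le (ha j), hstat j, hom j]
  exact (mul_eq_zero.mp (hcs1 j)).resolve_left hlam_pos.ne'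

/-- KKT conditions for the caching problem: if the multiplier `ν` satisfies
`ν > a j * ∑ n, n * p n * q j n`, then the optimal solution has `b̄ j = 0`. -/
theorem stmt6 (J : ℕ) (a : Fin J → ℝ) (p : ℕ → ℝ) (q : Fin J → ℕ → ℝ) (K : ℝ)
    (ha : ∀ j, 0 ≤ a j) (hp : ∀ n, 0 ≤ p n) (hppmf : ∑' n, p n = 1)
    (hq : ∀ j n, q j n ∈ Set.Icc (0:ℝ) 1)
    (b : Fin J → ℝ) (lam om : Fin J → ℝ) (ν : ℝ)
    (hb : ∀ j, b j ∈ Set.Icc (0:ℝ) 1) (hcap : ∑ j, b j = K)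
    (hlam : ∀ j, 0 ≤ lam j) (hom : ∀ j, 0 ≤ om j)
    (hcs1 : ∀ j, lam j * b j = 0) (hcs2 : ∀ j, om j * (b j - 1) = 0)
    (hsum : ∀ j, Summable (fun n : ℕ => (n:ℝ) * p n * q j n))
    (hder : ∀ j, Summable (fun n : ℕ => ((n:ℝ) + 1) * (1 - b j) ^ n * p (n + 1) * q j (n + 1)))
    (hstat : ∀ j, a j * ∑' n : ℕ, ((n:ℝ) + 1) * (1 - b j) ^ n * p (n + 1) * q j (n + 1)
      = ν - lam j + om j)
    (j : Fin J) (hν : ν > a j * ∑' n : ℕ, (n:ℝ) * p n * q j n) :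
    b j = 0 :=
  stmt6_general J a p q ha hp hq b lam om ν hb hom hcs1 hsum hstat j hν
end

section
/- Let b_j ∈ [0,1] with ∑_{j=1}^J b_j = K for an integer K with 1 ≤ K ≤ J. Partition [0, K) into consecutive half-open intervals I_1, …, I_J of lengths b_1, …, b_J (wrapping the line [0,K) and viewing positions modulo 1). Then for u uniform on [0,1), the set S(u) = {j : I_j ∩ ({u, u+1, …, u+K−1}) ≠ ∅} satisfies |S(u)| = K almost surely, and P(j ∈ S(u)) = b_j for every j. -/
/-!
For `u ∈ [0, 1)` each point `u + k`, `k < K`, lies in exactly one interval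
`[c j, c (j + 1))`, and since these intervals have length `b j ≤ 1`, no interval contains two
of the points. Hence the intervals hit by the points are in bijection with the `K` points.
For the selection probability, cut `[c j, c (j + 1)) ⊆ [0, K)` along the integers: the pieces
translated back into `[0, 1)` are pairwise disjoint (again because `b j ≤ 1`), so the event
`j ∈ S(u)` has measure `c (j + 1) - c j = b j`.
-/

open MeasureTheory Set

theorem Set.ncard_setOf_exists_rel {α β : Type*} {s : Set α} {t : Set β} {R : α → β → Prop}
    (hex : ∀ b ∈ t, ∃ a ∈ s, R a b)
    (hleft : ∀ a ∈ s, ∀ a' ∈ s, ∀ b ∈ t, R a b → R a' b → a = a')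
    (hright : ∀ a ∈ s, ∀ b ∈ t, ∀ b' ∈ t, R a b → R a b' → b = b') :
    {a | a ∈ s ∧ ∃ b ∈ t, R a b}.ncard = t.ncard := by
  choose f hfs hfR using hex
  symm
  refine ncard_congr f (fun b hb => ⟨hfs b hb, b, hb, hfR b hb⟩) ?_ ?_
  · intro b b' hb hb' hbb'
    exact hright _ (hfs b hb) b hb b' hb' (hfR b hb) (hbb' ▸ hfR b' hb')
  · rintro a ⟨ha, b, hb, hab⟩
    exact ⟨b, hb, hleft _ (hfs b hb) a ha b hb (hfR b hb) hab⟩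

theorem exists_mem_Ico_succ_of_le_of_lt {α : Type*} [LinearOrder α] {c : ℕ → α} {x : α}
    {n : ℕ} (h0 : c 0 ≤ x) (hn : x < c n) : ∃ j < n, x ∈ Ico (c j) (c (j + 1)) := by
  induction n with
  | zero => exact absurd hn h0.not_gt
  | succ n ih =>
    by_cases hxn : x < c n
    · obtain ⟨j, hj, hx⟩ := ih hxn
      exact ⟨j, by omega, hx⟩
    · exact ⟨n, n.lt_succ_self, not_lt.1 hxn, hn⟩

theorem MonotoneOn.eq_of_mem_Ico_succ {α : Type*} [Preorder α] {c : ℕ → α} {n j j' : ℕ}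
    {x : α} (hc : MonotoneOn c (Iic n)) (hj : j < n) (hj' : j' < n)
    (hx : x ∈ Ico (c j) (c (j + 1))) (hx' : x ∈ Ico (c j') (c (j' + 1))) : j = j' := by
  have key : ∀ {i i'}, i < i' → i' < n → x ∈ Ico (c i) (c (i + 1)) →
      x ∉ Ico (c i') (c (i' + 1)) := fun hii' hi' hx hx' =>
    (hx.2.trans_le (hc (mem_Iic.2 (by omega)) (mem_Iic.2 hi'.le) hii')).not_ge hx'.1
  rcases lt_trichotomy j j' with h | h | h
  · exact absurd hx' (key h hj' hx)
  · exact h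
  · exact absurd hx (key h hj hx')

theorem eq_of_add_natCast_mem_Ico {α : Type*} [Field α] [LinearOrder α] [IsStrictOrderedRing α]
    {a b x : α} {k k' : ℕ} (hab : b ≤ a + 1)
    (hk : x + k ∈ Ico a b) (hk' : x + k' ∈ Ico a b) : k = k' := by
  have h₁ : (k : α) < k' + 1 := by linarith [hk.2, hk'.1]
  have h₂ : (k' : α) < k + 1 := by linarith [hk.1, hk'.2]
  have : k < k' + 1 := by exact_mod_cast h₁
  have : k' < k + 1 := by exact_mod_cast h₂
  omega

theorem volume_setOf_exists_add_natCast_mem {A : Set ℝ} {K : ℕ} (hA : MeasurableSet A)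
    (hAK : A ⊆ Ico 0 K) (hsep : ∀ (u : ℝ) (k k' : ℕ), u + k ∈ A → u + k' ∈ A → k = k') :
    volume {u | u ∈ Ico (0 : ℝ) 1 ∧ ∃ k < K, u + k ∈ A} = volume A := by
  set T : ℕ → Set ℝ := fun k => A ∩ Ico (k : ℝ) (k + 1)
  have hT : ∀ k ∈ Finset.range K, MeasurableSet (T k) := fun _ _ => hA.inter measurableSet_Ico
  have hT_disj : (Finset.range K : Set ℕ).PairwiseDisjoint T := by
    intro k _ k' _ hkk'
    have := pairwise_disjoint_Ico_intCast ℝ (Int.ofNat_inj.not.2 hkk')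
    simp only [Function.onFun, Int.cast_natCast] at this
    exact this.mono inter_subset_right inter_subset_right
  have hA_eq : A = ⋃ k ∈ Finset.range K, T k := by
    refine Subset.antisymm (fun x hx => ?_) (iUnion₂_subset fun _ _ => inter_subset_left)
    obtain ⟨hx0, hxK⟩ := hAK hx
    exact mem_iUnion₂.2 ⟨⌊x⌋₊, Finset.mem_range.2 ((Nat.floor_lt hx0).2 hxK), hx,
      Nat.floor_le hx0, Nat.lt_floor_add_one x⟩
  have hset : {u | u ∈ Ico (0 : ℝ) 1 ∧ ∃ k < K, u + k ∈ A}
      = ⋃ k ∈ Finset.range K, (· + (k : ℝ)) ⁻¹' T k := by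
    ext u
    simp only [T, mem_ofPred_eq, mem_iUnion, mem_preimage, mem_inter_iff, mem_Ico,
      Finset.mem_range, exists_prop]
    constructor
    · rintro ⟨⟨h0, h1⟩, k, hk, hkA⟩
      exact ⟨k, hk, hkA, by linarith, by linarith⟩
    · rintro ⟨k, hk, hkA, h0, h1⟩
      exact ⟨⟨by linarith, by linarith⟩, k, hk, hkA⟩
  have hpre_disj : (Finset.range K : Set ℕ).PairwiseDisjoint fun k => (· + (k : ℝ)) ⁻¹' T k :=
    fun k _ k' _ hkk' => disjoint_left.2 fun u hu hu' => hkk' (hsep u k k' hu.1 hu'.1)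
  calc volume {u | u ∈ Ico (0 : ℝ) 1 ∧ ∃ k < K, u + k ∈ A}
      = ∑ k ∈ Finset.range K, volume ((· + (k : ℝ)) ⁻¹' T k) := by
        rw [hset, measure_biUnion_finset hpre_disj fun k hk => measurable_add_const _ (hT k hk)]
    _ = ∑ k ∈ Finset.range K, volume (T k) :=
        Finset.sum_congr rfl fun k _ => measure_preimage_add_right _ _ _
    _ = volume A := by rw [← measure_biUnion_finset hT_disj hT, ← hA_eq]

theorem stmt14_general (J K : ℕ)
    (b : ℕ → ℝ) (hb : ∀ j < J, b j ∈ Set.Icc (0:ℝ) 1)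
    (hcap : ∑ j ∈ Finset.range J, b j = (K : ℝ))
    (c : ℕ → ℝ) (hc : ∀ m, c m = ∑ i ∈ Finset.range m, b i) :
    (∀ᵐ u ∂(MeasureTheory.volume.restrict (Set.Ico (0:ℝ) 1)),
      Set.ncard {j : ℕ | j < J ∧ ∃ k < K, c j ≤ u + k ∧ u + k < c (j + 1)} = K) ∧
    (∀ j < J,
      MeasureTheory.volume
        {u : ℝ | u ∈ Set.Ico (0:ℝ) 1 ∧ ∃ k < K, c j ≤ u + k ∧ u + k < c (j + 1)}
        = ENNReal.ofReal (b j)) := by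
  have hstep : ∀ j, c (j + 1) = c j + b j := fun j => by rw [hc, hc, Finset.sum_range_succ]
  have hc0 : c 0 = 0 := by rw [hc, Finset.sum_range_zero]
  have hcJ : c J = K := (hc J).trans hcap
  have hmono : MonotoneOn c (Iic J) := fun m _ n hn hmn => by
    rw [hc, hc]
    exact Finset.sum_le_sum_of_subset_of_nonneg (Finset.range_subset_range.2 hmn)
      fun i hi _ => (hb i ((Finset.mem_range.1 hi).trans_le hn)).1
  have hlen : ∀ j < J, c (j + 1) ≤ c j + 1 := fun j hj => by
    rw [hstep]; linarith [(hb j hj).2]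
  refine ⟨(ae_restrict_mem measurableSet_Ico).mono fun u hu => ?_, fun j hj => ?_⟩
  · refine (Set.ncard_setOf_exists_rel (s := Iio J) (t := Iio K)
      (R := fun j k => u + (k : ℝ) ∈ Ico (c j) (c (j + 1))) ?_ ?_ ?_).trans (ncard_Iio_nat K)
    · intro k hk
      have hkK : (k : ℝ) + 1 ≤ K := by exact_mod_cast mem_Iio.1 hk
      exact exists_mem_Ico_succ_of_le_of_lt (by rw [hc0]; linarith [hu.1])
        (by rw [hcJ]; linarith [hu.2])
    · exact fun j hj j' hj' _ _ => hmono.eq_of_mem_Ico_succ hj hj'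
    · exact fun j hj _ _ _ _ => eq_of_add_natCast_mem_Ico (hlen j hj)
  · have hsub : Ico (c j) (c (j + 1)) ⊆ Ico 0 K := by
      rw [← hc0, ← hcJ]
      exact Ico_subset_Ico (hmono (mem_Iic.2 (Nat.zero_le J)) (mem_Iic.2 hj.le) (Nat.zero_le j))
        (hmono (mem_Iic.2 hj) (mem_Iic.2 le_rfl) hj)
    refine (volume_setOf_exists_add_natCast_mem measurableSet_Ico hsub
      fun _ _ _ => eq_of_add_natCast_mem_Ico (hlen j hj)).trans ?_
    rw [Real.volume_Ico, hstep, add_sub_cancel_left]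

/-- Realization of probabilistic placement: partition `[0, K)` into consecutive
half-open intervals of lengths `b 0, …, b (J-1)` and pick the `K` points
`u, u+1, …, u+K-1` for `u` uniform on `[0,1)`. Then almost surely exactly `K`
distinct files are selected, and file `j` is selected with probability `b j`. -/
theorem stmt14 (J K : ℕ) (hK1 : 1 ≤ K) (hKJ : K ≤ J)
    (b : ℕ → ℝ) (hb : ∀ j < J, b j ∈ Set.Icc (0:ℝ) 1)
    (hcap : ∑ j ∈ Finset.range J, b j = (K : ℝ))
    (c : ℕ → ℝ) (hc : ∀ m, c m = ∑ i ∈ Finset.range m, b i) :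
    (∀ᵐ u ∂(MeasureTheory.volume.restrict (Set.Ico (0:ℝ) 1)),
      Set.ncard {j : ℕ | j < J ∧ ∃ k < K, c j ≤ u + k ∧ u + k < c (j + 1)} = K) ∧
    (∀ j < J,
      MeasureTheory.volume
        {u : ℝ | u ∈ Set.Ico (0:ℝ) 1 ∧ ∃ k < K, c j ≤ u + k ∧ u + k < c (j + 1)}
        = ENNReal.ofReal (b j)) :=
  stmt14_general J K b hb hcap c hc
end
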